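/- Let * be a continuous t-norm and let φ be a distance distribution. Then every distance distribution ξ with ξ ≤ φ pointwise is divisible by φ (i.e., there exists a distance distribution ψ with φ ⊗ ψ = ξ) if and only if φ is a one-step function, i.e., φ = κ_{p,a} for some p ∈ [0,∞) and a ∈ [0,1]. -/

import Mathlib

open unitInterval
open scoped ENNReal

noncomputable section

instance : Fact ((0:ℝ) ≤ 1) := ⟨zero_le_one⟩

/-- A distance distribution: a map `φ : [0,∞] → [0,1]` with `φ t = ⨆ s < t, φ s`. -/
def DistDistr (φ : ℝ≥0∞ → I) : Prop :=
  ∀ t, φ t = ⨆ (s : ℝ≥0∞) (_ : s < t), φ s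

/-- The one-step function `κ_{p,a}`. -/
def kappa (p : ℝ≥0∞) (a : I) : ℝ≥0∞ → I :=
  fun t => if t ≤ p then 0 else a

/-- A continuous t-norm on `[0,1]`. -/
structure ContinuousTNorm where
  mul : I → I → I
  continuous' : Continuous fun p : I × I => mul p.1 p.2
  comm : ∀ a b, mul a b = mul b a
  assoc : ∀ a b c, mul (mul a b) c = mul a (mul b c)
  mono : ∀ a, Monotone (mul a)
  mul_one : ∀ a, mul a 1 = a

/-- The residual `a →* b` of a continuous t-norm. -/
def ContinuousTNorm.residual (T : ContinuousTNorm) (a b : I) : I :=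
  sSup {c | T.mul a c ≤ b}

/-- Convolution of maps `[0,∞] → [0,1]` w.r.t. a continuous t-norm. -/
def conv (T : ContinuousTNorm) (φ ψ : ℝ≥0∞ → I) : ℝ≥0∞ → I :=
  fun t => ⨆ (r : ℝ≥0∞) (s : ℝ≥0∞) (_ : r + s = t), T.mul (φ r) (ψ s)

/-- `φ⁻ t = ⨆ s < t, φ s`. -/
def lower (φ : ℝ≥0∞ → I) : ℝ≥0∞ → I :=
  fun t => ⨆ (s : ℝ≥0∞) (_ : s < t), φ s


/-! If `φ = κ_{p,a}`, the residuals `a →* ξ (u + p)`, made left-continuous, divide any `ξ ≤ φ`.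

Conversely, suppose `φ` takes a value `b = φ t₀` strictly between `0` and `φ ∞`. A quotient `ψ`
of `φ ⊓ κ_{0,b}` by `φ` gives `x = ψ ∞` with `φ ∞ * x = b = b * x`; the least `z` with `b * z = b`
is idempotent, so `z * y = min z y`, which forces `z = b`: `b` is idempotent. Now take `m` strictly
between the last zero of `φ` and the last point where `φ ≤ b`. A quotient `ψ` of `φ ⊓ κ_{m,1}`
exceeds `b` on `(0, ∞]`, so for `r < m` with `φ r > 0` idempotency of `b` gives
`φ r * ψ (m - r) ≥ b * min (φ r) b = min (φ r) b > 0`, although the quotient vanishes at `m`. -/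

namespace ContinuousTNorm

variable (T : ContinuousTNorm)

lemma mul_le_left (a b : I) : T.mul a b ≤ a :=
  (T.mono a le_one').trans_eq (T.mul_one a)

lemma mul_le_right (a b : I) : T.mul a b ≤ b := T.comm a b ▸ T.mul_le_left b a

lemma mul_mono {a b c d : I} (hac : a ≤ c) (hbd : b ≤ d) : T.mul a b ≤ T.mul c d :=
  calc T.mul a b ≤ T.mul a d := T.mono a hbd
    _ = T.mul d a := T.comm a d
    _ ≤ T.mul d c := T.mono d hac
    _ = T.mul c d := T.comm d c

protected lemma mul_zero (a : I) : T.mul a 0 = 0 := le_antisymm (T.mul_le_right a 0) nonneg'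

protected lemma zero_mul (a : I) : T.mul 0 a = 0 := le_antisymm (T.mul_le_left 0 a) nonneg'

lemma continuous_mul_left (a : I) : Continuous (T.mul a) :=
  T.continuous'.comp (Continuous.prodMk_right a)

lemma mul_iSup {ι : Sort*} (a : I) (g : ι → I) : T.mul a (⨆ i, g i) = ⨆ i, T.mul a (g i) :=
  Monotone.map_iSup_of_continuousAt (T.continuous_mul_left a).continuousAt (T.mono a)
    (T.mul_zero a)

lemma exists_mul_eq {a b : I} (h : b ≤ a) : ∃ c, T.mul a c = b :=
  intermediate_value_univ 0 1 (T.continuous_mul_left a)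
    ⟨(T.mul_zero a).trans_le nonneg', h.trans_eq (T.mul_one a).symm⟩

lemma mul_residual {a b : I} (h : b ≤ a) : T.mul a (T.residual a b) = b := by
  obtain ⟨c, hc⟩ := T.exists_mul_eq h
  have hmem : T.residual a b ∈ {x | T.mul a x ≤ b} :=
    IsClosed.sSup_mem ⟨c, hc.le⟩ (isClosed_Iic.preimage (T.continuous_mul_left a))
  exact le_antisymm hmem (hc.symm.trans_le (T.mono a (le_sSup hc.le)))

lemma mul_eq_min_of_mul_self {z : I} (hz : T.mul z z = z) (y : I) : T.mul z y = min z y := by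
  rcases le_total y z with hyz | hzy
  · obtain ⟨w, rfl⟩ := T.exists_mul_eq hyz
    rw [← T.assoc, hz, min_eq_right hyz]
  · rw [min_eq_left hzy]
    exact le_antisymm (T.mul_le_left z y) (hz.symm.trans_le (T.mono z hzy))

/-- The least `z` with `b * z = b` exists since this set is closed, and it is idempotent since
the set is closed under `*`. -/
lemma exists_mul_self_eq_of_mul_eq {b x : I} (hbx : T.mul b x = b) :
    ∃ z, T.mul z z = z ∧ b ≤ z ∧ z ≤ x ∧ T.mul b z = b := by
  set S := {y | T.mul b y = b}
  have hS : sInf S ∈ S :=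
    IsClosed.sInf_mem ⟨x, hbx⟩ (isClosed_eq (T.continuous_mul_left b) continuous_const)
  have hSS : T.mul (sInf S) (sInf S) ∈ S := by
    change T.mul b _ = b
    rw [← T.assoc, hS, hS]
  refine ⟨sInf S, le_antisymm (T.mul_le_left _ _) (sInf_le hSS), ?_, sInf_le hbx, hS⟩
  exact hS.symm.trans_le (T.mul_le_right _ _)

lemma mul_self_eq_of_mul_eq {b c x : I} (hbx : T.mul b x = b) (hcx : T.mul c x = b)
    (hbc : b < c) : T.mul b b = b := by
  obtain ⟨z, hzz, hbz, hzx, -⟩ := T.exists_mul_self_eq_of_mul_eq hbx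
  have hmin : min z c ≤ b :=
    calc min z c = T.mul c z := by rw [T.comm, T.mul_eq_min_of_mul_self hzz]
      _ ≤ T.mul c x := T.mono c hzx
      _ = b := hcx
  have hzb : z ≤ b := by
    rcases le_total z c with hzc | hcz
    · rwa [min_eq_left hzc] at hmin
    · exact (hbc.not_ge ((min_eq_right hcz).symm.trans_le hmin)).elim
  rwa [le_antisymm hzb hbz] at hzz

end ContinuousTNorm

section DistDistr

variable {φ ψ : ℝ≥0∞ → I}

lemma DistDistr.monotone (hφ : DistDistr φ) : Monotone φ := fun s t hst => by
  rw [hφ s, hφ t]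
  exact iSup₂_le fun u hu => le_iSup₂_of_le u (hu.trans_le hst) le_rfl

lemma kappa_of_le {p t : ℝ≥0∞} (a : I) (h : t ≤ p) : kappa p a t = 0 := if_pos h

lemma kappa_of_lt {p t : ℝ≥0∞} (a : I) (h : p < t) : kappa p a t = a := if_neg h.not_ge

lemma kappa_le (p : ℝ≥0∞) (a : I) (t : ℝ≥0∞) : kappa p a t ≤ a := by
  rcases le_or_gt t p with h | h
  · exact (kappa_of_le a h).trans_le nonneg'
  · exact (kappa_of_lt a h).le

lemma distDistr_kappa (p : ℝ≥0∞) (a : I) : DistDistr (kappa p a) := by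
  intro t
  rcases le_or_gt t p with ht | ht
  · rw [kappa_of_le a ht]
    exact le_antisymm nonneg' (iSup₂_le fun s hs => (kappa_of_le a (hs.le.trans ht)).le)
  · obtain ⟨m, hpm, hmt⟩ := exists_between ht
    rw [kappa_of_lt a ht]
    exact le_antisymm (le_iSup₂_of_le m hmt (kappa_of_lt a hpm).ge)
      (iSup₂_le fun s _ => kappa_le p a s)

lemma DistDistr.inf (hφ : DistDistr φ) (hψ : DistDistr ψ) : DistDistr fun t => φ t ⊓ ψ t := by
  intro t
  refine le_antisymm (le_of_forall_lt fun c hc => ?_)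
    (iSup₂_le fun s hs => inf_le_inf (hφ.monotone hs.le) (hψ.monotone hs.le))
  rw [lt_inf_iff, hφ t, hψ t] at hc
  simp only [lt_iSup_iff] at hc
  obtain ⟨⟨u, hu, hcu⟩, ⟨v, hv, hcv⟩⟩ := hc
  exact lt_of_lt_of_le (lt_inf_iff.2 ⟨hcu.trans_le (hφ.monotone (le_max_left u v)),
    hcv.trans_le (hψ.monotone (le_max_right u v))⟩) (le_iSup₂_of_le _ (max_lt hu hv) le_rfl)

lemma distDistr_lower (φ : ℝ≥0∞ → I) : DistDistr (lower φ) := by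
  intro t
  refine le_antisymm (iSup₂_le fun s hs => ?_)
    (iSup₂_le fun s hs => iSup₂_le fun u hu => le_iSup₂_of_le u (hu.trans hs) le_rfl)
  obtain ⟨m, hsm, hmt⟩ := exists_between hs
  exact le_iSup₂_of_le m hmt (le_iSup₂_of_le s hsm le_rfl)

def levelSup (φ : ℝ≥0∞ → I) (b : I) : ℝ≥0∞ := sSup {w | φ w ≤ b}

lemma le_levelSup {b : I} {w : ℝ≥0∞} (h : φ w ≤ b) : w ≤ levelSup φ b := le_sSup h

lemma lt_apply_of_levelSup_lt {b : I} {w : ℝ≥0∞} (h : levelSup φ b < w) : b < φ w :=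
  lt_of_not_ge fun hw => (le_levelSup hw).not_gt h

lemma DistDistr.apply_le_of_le_levelSup (hφ : DistDistr φ) {b : I} {t : ℝ≥0∞}
    (ht : t ≤ levelSup φ b) : φ t ≤ b := by
  refine (hφ.monotone ht).trans ?_
  rw [hφ]
  refine iSup₂_le fun s hs => ?_
  obtain ⟨w, hw, hsw⟩ := lt_sSup_iff.1 hs
  exact (hφ.monotone hsw.le).trans hw

lemma DistDistr.levelSup_ne_top (hφ : DistDistr φ) {b : I} (hb : b < φ ∞) :
    levelSup φ b ≠ ∞ := by
  rw [hφ] at hb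
  simp only [lt_iSup_iff] at hb
  obtain ⟨s, hs, hbs⟩ := hb
  exact ne_top_of_le_ne_top hs.ne
    (le_of_not_gt fun hsb => (hφ.apply_le_of_le_levelSup hsb.le).not_gt hbs)

end DistDistr

section Conv

variable {T : ContinuousTNorm} {φ ψ : ℝ≥0∞ → I}

lemma le_conv {r s t : ℝ≥0∞} (hrs : r + s = t) : T.mul (φ r) (ψ s) ≤ conv T φ ψ t :=
  le_iSup_of_le r (le_iSup₂_of_le s hrs le_rfl)

lemma conv_le {t : ℝ≥0∞} {x : I} (h : ∀ r s, r + s = t → T.mul (φ r) (ψ s) ≤ x) :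
    conv T φ ψ t ≤ x :=
  iSup_le fun r => iSup₂_le fun s hrs => h r s hrs

lemma exists_lt_mul_of_lt_conv {t : ℝ≥0∞} {x : I} (h : x < conv T φ ψ t) :
    ∃ r s, r + s = t ∧ x < T.mul (φ r) (ψ s) := by
  simpa only [conv, lt_iSup_iff, exists_prop] using h

lemma conv_le_mul_apply_top (hφ : Monotone φ) (hψ : Monotone ψ) (t : ℝ≥0∞) :
    conv T φ ψ t ≤ T.mul (φ t) (ψ ∞) :=
  conv_le fun _ _ hrs => T.mul_mono (hφ (hrs ▸ le_self_add)) (hψ le_top)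

lemma conv_top (hφ : Monotone φ) (hψ : Monotone ψ) : conv T φ ψ ∞ = T.mul (φ ∞) (ψ ∞) :=
  le_antisymm (conv_le_mul_apply_top hφ hψ ∞) (le_conv (top_add ∞))

end Conv

section Kappa

variable {T : ContinuousTNorm} {ξ g : ℝ≥0∞ → I} {p : ℝ≥0∞} {a : I}

lemma conv_kappa_lower_le (hξ : Monotone ξ) (hg : ∀ u, T.mul a (g u) ≤ ξ (u + p)) (t : ℝ≥0∞) :
    conv T (kappa p a) (lower g) t ≤ ξ t := by
  refine conv_le fun r s hrs => ?_
  rcases le_or_gt r p with hr | hr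
  · rw [kappa_of_le a hr, T.zero_mul]
    exact nonneg'
  · rw [kappa_of_lt a hr, lower, T.mul_iSup]
    refine iSup_le fun u => ?_
    rw [T.mul_iSup]
    refine iSup_le fun hu => (hg u).trans (hξ ?_)
    rw [← hrs, add_comm r s]
    exact (ENNReal.add_lt_add hu hr).le

lemma le_conv_kappa_lower (hξ : DistDistr ξ) (hle : ∀ t, ξ t ≤ kappa p a t)
    (hg : ∀ u, ξ (u + p) ≤ T.mul a (g u)) (t : ℝ≥0∞) :
    ξ t ≤ conv T (kappa p a) (lower g) t := by
  rw [hξ t]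
  refine iSup₂_le fun u hut => ?_
  rcases le_or_gt u p with hup | hpu
  · exact (hle u).trans ((kappa_of_le a hup).trans_le nonneg')
  have hp : p ≠ ∞ := ne_top_of_lt hpu
  obtain ⟨s, hus, hst⟩ : ∃ s, u - p < s ∧ s < t - p :=
    exists_between ((ENNReal.cancel_of_ne hp).tsub_lt_tsub_right_of_le hpu.le hut)
  have hrs : t - s + s = t := tsub_add_cancel_of_le (hst.le.trans tsub_le_self)
  have hpr : p < t - s := lt_tsub_iff_right.2 (lt_tsub_iff_left.1 hst)
  calc ξ u = ξ (u - p + p) := by rw [tsub_add_cancel_of_le hpu.le]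
    _ ≤ T.mul a (g (u - p)) := hg _
    _ ≤ T.mul (kappa p a (t - s)) (lower g s) := by
      rw [kappa_of_lt a hpr]
      exact T.mono a (le_iSup₂_of_le (u - p) hus le_rfl)
    _ ≤ conv T (kappa p a) (lower g) t := le_conv hrs

theorem conv_kappa_lower_residual (hξ : DistDistr ξ) (hle : ∀ t, ξ t ≤ kappa p a t) :
    conv T (kappa p a) (lower fun u => T.residual a (ξ (u + p))) = ξ := by
  have hmul : ∀ u, T.mul a (T.residual a (ξ (u + p))) = ξ (u + p) := fun u =>
    T.mul_residual ((hle _).trans (kappa_le p a _))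
  exact funext fun t => le_antisymm (conv_kappa_lower_le hξ.monotone (fun u => (hmul u).le) t)
    (le_conv_kappa_lower hξ hle (fun u => (hmul u).ge) t)

end Kappa

section OneStep

variable {T : ContinuousTNorm} {φ ψ : ℝ≥0∞ → I}

lemma mul_self_eq_of_conv_eq_inf_kappa_zero (hφ : DistDistr φ) (hψ : DistDistr ψ) {t₀ : ℝ≥0∞}
    (h : ∀ t, conv T φ ψ t = φ t ⊓ kappa 0 (φ t₀) t) (ht₀ : 0 < t₀) (hlt : φ t₀ < φ ∞) :
    T.mul (φ t₀) (φ t₀) = φ t₀ := by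
  refine T.mul_self_eq_of_mul_eq (x := ψ ∞) ?_ ?_ hlt
  · refine le_antisymm (T.mul_le_left _ _) ?_
    calc φ t₀ = conv T φ ψ t₀ := by rw [h, kappa_of_lt _ ht₀, inf_idem]
      _ ≤ T.mul (φ t₀) (ψ ∞) := conv_le_mul_apply_top hφ.monotone hψ.monotone t₀
  · rw [← conv_top hφ.monotone hψ.monotone, h, kappa_of_lt _ ENNReal.zero_lt_top,
      inf_eq_right.2 hlt.le]

lemma lt_apply_of_conv_eq_inf_kappa (hφ : DistDistr φ) (hψ : DistDistr ψ) {m : ℝ≥0∞} {b : I}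
    (h : ∀ t, conv T φ ψ t = φ t ⊓ kappa m 1 t) (hm : m < levelSup φ b) (hb : b < φ ∞)
    {s : ℝ≥0∞} (hs : s ≠ 0) : b < ψ s := by
  set Q := levelSup φ b
  have hQ : Q < Q + s := ENNReal.lt_add_right (hφ.levelSup_ne_top hb) hs
  have hconv : b < conv T φ ψ (Q + s) := by
    rw [h, kappa_of_lt _ (hm.trans hQ), inf_of_le_left le_one']
    exact lt_apply_of_levelSup_lt hQ
  obtain ⟨r, s', hrs, hlt⟩ := exists_lt_mul_of_lt_conv hconv
  have hQr : Q < r := lt_of_not_ge fun hr =>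
    (hlt.trans_le (T.mul_le_left _ _)).not_ge (hφ.apply_le_of_le_levelSup hr)
  have hs' : s' ≤ s := le_of_not_gt fun hss' => (ENNReal.add_lt_add hQr hss').ne' hrs
  exact hlt.trans_le ((T.mul_le_right _ _).trans (hψ.monotone hs'))

lemma conv_ne_inf_kappa (hφ : DistDistr φ) (hψ : DistDistr ψ) {m : ℝ≥0∞} {b : I} (hb₀ : 0 < b)
    (hbb : T.mul b b = b) (hb : b < φ ∞) (hm₀ : levelSup φ 0 < m) (hm : m < levelSup φ b) :
    ¬∀ t, conv T φ ψ t = φ t ⊓ kappa m 1 t := by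
  intro h
  obtain ⟨r, hr₀, hrm⟩ := exists_between hm₀
  have hψb : b < ψ (m - r) :=
    lt_apply_of_conv_eq_inf_kappa hφ hψ h hm hb (tsub_pos_iff_lt.2 hrm).ne'
  have hconv : conv T φ ψ m = 0 := by
    rw [h, kappa_of_le _ le_rfl]
    exact inf_bot_eq _
  refine (?_ : (0 : I) < conv T φ ψ m).ne' hconv
  calc (0 : I) < min (φ r) b := lt_min (lt_apply_of_levelSup_lt hr₀) hb₀
    _ = T.mul b (min (φ r) b) := by
      rw [T.mul_eq_min_of_mul_self hbb, min_eq_right (min_le_right _ _)]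
    _ ≤ T.mul (ψ (m - r)) (φ r) := T.mul_mono hψb.le (min_le_left _ _)
    _ = T.mul (φ r) (ψ (m - r)) := T.comm _ _
    _ ≤ conv T φ ψ m := le_conv (add_tsub_cancel_of_le hrm.le)

lemma DistDistr.apply_eq_zero_or_eq_apply_top (hφ : DistDistr φ)
    (H : ∀ ξ : ℝ≥0∞ → I, DistDistr ξ → (∀ t, ξ t ≤ φ t) →
      ∃ ψ : ℝ≥0∞ → I, DistDistr ψ ∧ conv T φ ψ = ξ) (t : ℝ≥0∞) :
    φ t = 0 ∨ φ t = φ ∞ := by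
  by_contra! ht
  have hb₀ : 0 < φ t := lt_of_le_of_ne nonneg' ht.1.symm
  have hb : φ t < φ ∞ := lt_of_le_of_ne (hφ.monotone le_top) ht.2
  have ht₀ : levelSup φ 0 < t :=
    lt_of_not_ge fun h => (hφ.apply_le_of_le_levelSup h).not_gt hb₀
  obtain ⟨ψ₀, hψ₀, h₀⟩ := H _ (hφ.inf (distDistr_kappa 0 (φ t))) fun _ => inf_le_left
  have hbb := mul_self_eq_of_conv_eq_inf_kappa_zero hφ hψ₀ (congrFun h₀) (bot_le.trans_lt ht₀) hb
  obtain ⟨m, hm₀, hm⟩ := exists_between (ht₀.trans_le (le_levelSup le_rfl))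
  obtain ⟨ψ₁, hψ₁, h₁⟩ := H _ (hφ.inf (distDistr_kappa m 1)) fun _ => inf_le_left
  exact conv_ne_inf_kappa hφ hψ₁ hb₀ hbb hb hm₀ hm (congrFun h₁)

lemma DistDistr.exists_eq_kappa (hφ : DistDistr φ) (h : ∀ t, φ t = 0 ∨ φ t = φ ∞) :
    ∃ (p : ℝ≥0∞) (a : I), p ≠ ∞ ∧ φ = kappa p a := by
  rcases eq_or_ne (φ ∞) 0 with h0 | h0
  · refine ⟨0, 0, ENNReal.zero_ne_top, funext fun t => ?_⟩
    rw [(h t).elim id (·.trans h0), kappa]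
    exact (ite_self 0).symm
  refine ⟨levelSup φ 0, φ ∞, hφ.levelSup_ne_top (lt_of_le_of_ne nonneg' h0.symm),
    funext fun t => ?_⟩
  rcases le_or_gt t (levelSup φ 0) with ht | ht
  · rw [kappa_of_le _ ht]
    exact le_antisymm (hφ.apply_le_of_le_levelSup ht) nonneg'
  · rw [kappa_of_lt _ ht]
    exact (h t).resolve_left (lt_apply_of_levelSup_lt ht).ne'

end OneStep

/-- every distance distribution `ξ ≤ φ` is divisible by `φ` iff `φ`
is a one-step function. -/
theorem stmt_17 (T : ContinuousTNorm) (φ : ℝ≥0∞ → I) (hφ : DistDistr φ) :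
    (∀ ξ : ℝ≥0∞ → I, DistDistr ξ → (∀ t, ξ t ≤ φ t) →
        ∃ ψ : ℝ≥0∞ → I, DistDistr ψ ∧ conv T φ ψ = ξ) ↔
      ∃ (p : ℝ≥0∞) (a : I), p ≠ ∞ ∧ φ = kappa p a := by
  constructor
  · exact fun H => hφ.exists_eq_kappa (hφ.apply_eq_zero_or_eq_apply_top H)
  · rintro ⟨p, a, -, rfl⟩ ξ hξ hle
    exact ⟨_, distDistr_lower _, conv_kappa_lower_residual hξ hle⟩
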